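/- There exist a monotonically shrinking temporal path P and a monotonically shrinking temporal cycle C, each consisting of two layers, such that the two-player temporal Voronoi games Vor(P, 2) and Vor(C, 2) admit no Nash equilibrium. Concretely, one may take P = ([8], E_1, E_2) with E_1 = {{i, i+1} : i ∈ [7]} and E_2 = E_1 \ {{2,3}}, and C = ([11], F_1, F_2) with F_1 = {{i, i+1} : i ∈ [10]} ∪ {{1,11}} and F_2 = F_1 \ {{1,2}, {3,4}, {9,10}, {10,11}, {11,1}}. -/

import Mathlib

open Finset

/-- A temporal graph on vertex set `{1, …, n}` with layers `E 1, …, E tau`. -/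
structure TemporalGraph where
  n : ℕ
  tau : ℕ
  htau : 1 ≤ tau
  E : ℕ → Finset (Sym2 ℕ)

namespace TemporalGraph

/-- The vertex set `[n] = {1, …, n}`. -/
def V (G : TemporalGraph) : Finset ℕ := Finset.Icc 1 G.n

/-- The underlying edge set `⋃_{t=1}^τ E_t`. -/
def underlying (G : TemporalGraph) : Finset (Sym2 ℕ) := (Finset.Icc 1 G.tau).biUnion G.E

/-- The layer used at time `t ≥ 1`: `E t` for `t ≤ τ`, repeating `E τ` afterwards. -/
def layer (G : TemporalGraph) (t : ℕ) : Finset (Sym2 ℕ) := if t ≤ G.tau then G.E t else G.E G.tau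

/-- Edges of the path `1 – 2 – ⋯ – n`. -/
def pathEdges (n : ℕ) : Finset (Sym2 ℕ) := (Finset.Icc 1 (n - 1)).image (fun i => s(i, i + 1))

/-- Edges of the cycle on `[n]`: the path edges together with `{n, 1}`. -/
def cycleEdges (n : ℕ) : Finset (Sym2 ℕ) := insert s(n, 1) (pathEdges n)

/-- A temporal path of size `n`: the underlying graph is the path `1 – 2 – ⋯ – n`. -/
def IsPath (G : TemporalGraph) : Prop := 2 ≤ G.n ∧ G.underlying = pathEdges G.n

/-- A temporal cycle of size `n`: the underlying graph is the cycle on `[n]`. -/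
def IsCycle (G : TemporalGraph) : Prop := 3 ≤ G.n ∧ G.underlying = cycleEdges G.n

/-- The underlying simple graph of a temporal graph. -/
def underlyingGraph (G : TemporalGraph) : SimpleGraph ℕ where
  Adj u v := u ≠ v ∧ s(u, v) ∈ G.underlying
  symm := by
    constructor
    intro u v h
    refine ⟨h.1.symm, ?_⟩
    rw [Sym2.eq_swap]
    exact h.2
  loopless := ⟨fun v h => h.1 rfl⟩

/-- A temporal linear forest: all edges are loopless edges on the vertex set `[n]`,
and every connected component of the underlying graph is a path (equivalently, the
underlying graph is acyclic and every vertex lies on at most two edges). -/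
def IsLinearForest (G : TemporalGraph) : Prop :=
  (∀ e ∈ G.underlying, ¬ e.IsDiag ∧ ∀ x ∈ e, x ∈ G.V) ∧
  G.underlyingGraph.IsAcyclic ∧
  ∀ v : ℕ, (G.underlying.filter (fun e => v ∈ e)).card ≤ 2

/-- Superset temporal graph: the last layer equals the underlying graph. -/
def Superset (G : TemporalGraph) : Prop := G.E G.tau = G.underlying

/-- Monotonically growing: no edge disappears over time. -/
def Growing (G : TemporalGraph) : Prop := ∀ i, 1 ≤ i → i < G.tau → G.E i ⊆ G.E (i + 1)

/-- Monotonically shrinking: no edge appears over time. -/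
def Shrinking (G : TemporalGraph) : Prop := ∀ i, 1 ≤ i → i < G.tau → G.E (i + 1) ⊆ G.E i

/-! ### The temporal diffusion game -/

/-- Initial coloring for the diffusion game: `p i` is colored `i`, except that a
vertex chosen by both players is colored gray (`0`). -/
def diffInit (p1 p2 : ℕ) : ℕ → Option ℕ := fun v =>
  if v = p1 ∧ v = p2 then some 0
  else if v = p1 then some 1
  else if v = p2 then some 2
  else none

open Classical in
/-- One diffusion step on layer `Et`: an uncolored vertex with a neighbor of color
`i ∈ {1,2}` and no neighbor of the other color gets color `i`; an uncolored vertex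
with neighbors of both colors becomes gray (`0`); colored vertices keep their color. -/
noncomputable def diffStep (Vset : Finset ℕ) (Et : Finset (Sym2 ℕ)) (c : ℕ → Option ℕ) :
    ℕ → Option ℕ := fun v =>
  match c v with
  | some i => some i
  | none =>
    if v ∈ Vset ∧ (∃ u, s(u, v) ∈ Et ∧ c u = some 1) ∧ ¬ (∃ u, s(u, v) ∈ Et ∧ c u = some 2) then
      some 1
    else if v ∈ Vset ∧ (∃ u, s(u, v) ∈ Et ∧ c u = some 2) ∧ ¬ (∃ u, s(u, v) ∈ Et ∧ c u = some 1) then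
      some 2
    else if v ∈ Vset ∧ (∃ u, s(u, v) ∈ Et ∧ c u = some 1) ∧ (∃ u, s(u, v) ∈ Et ∧ c u = some 2) then
      some 0
    else none

/-- The coloring of the diffusion game after `t` steps (step `t` uses layer `t`,
where the last layer is repeated after time `τ`). -/
noncomputable def diffColoring (G : TemporalGraph) (p1 p2 : ℕ) : ℕ → ℕ → Option ℕ
  | 0 => diffInit p1 p2
  | t + 1 => diffStep G.V (G.layer (t + 1)) (diffColoring G p1 p2 t)

/-- The final coloring of the diffusion game. Since colored vertices never change
color and each non-stabilized step colors a new vertex, the process has stabilized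
after `τ + n` steps, i.e. this is the coloring once it no longer changes. -/
noncomputable def diffFinal (G : TemporalGraph) (p1 p2 : ℕ) : ℕ → Option ℕ :=
  diffColoring G p1 p2 (G.tau + G.n)

open Classical in
/-- Payoff of player `i` in the temporal diffusion game: the number of vertices
finally colored `i`. -/
noncomputable def diffPayoff (G : TemporalGraph) (p1 p2 i : ℕ) : ℕ :=
  (G.V.filter (fun v => diffFinal G p1 p2 v = some i)).card

/-- Nash equilibrium of the two-player temporal diffusion game `Diff(G, 2)`. -/
def diffNE (G : TemporalGraph) (p1 p2 : ℕ) : Prop :=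
  p1 ∈ G.V ∧ p2 ∈ G.V ∧
  (∀ q ∈ G.V, diffPayoff G q p2 1 ≤ diffPayoff G p1 p2 1) ∧
  (∀ q ∈ G.V, diffPayoff G p1 q 2 ≤ diffPayoff G p1 p2 2)

/-! ### Temporal distances and the temporal Voronoi game -/

/-- `G.reachesBy u t v`: there is a strict temporal walk from `u` to `v` with
arrival time at most `t` (layers after `τ` are the last layer `E τ`). -/
def reachesBy (G : TemporalGraph) (u : ℕ) : ℕ → ℕ → Prop
  | 0 => fun v => v = u
  | t + 1 => fun v =>
      reachesBy G u t v ∨ ∃ w, reachesBy G u t w ∧ s(w, v) ∈ G.layer (t + 1)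

/-- `u` reaches `v` (until step `τ`). -/
def reaches (G : TemporalGraph) (u v : ℕ) : Prop := G.reachesBy u G.tau v

/-- The temporal distance `td(u, v)`: the minimum arrival time of a strict
temporal walk from `u` to `v` (`0` for `u = v`, `⊤` if there is no such walk). -/
noncomputable def td (G : TemporalGraph) (u v : ℕ) : ℕ∞ :=
  sInf {t : ℕ∞ | ∃ k : ℕ, t = (k : ℕ∞) ∧ G.reachesBy u k v}

open Classical in
/-- The coloring in the temporal Voronoi game: `v` gets color `i` if player `i`
arrives strictly first, and is gray (`0`) on finite ties. -/
noncomputable def vorColor (G : TemporalGraph) (p1 p2 v : ℕ) : Option ℕ :=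
  if G.td p1 v < G.td p2 v then some 1
  else if G.td p2 v < G.td p1 v then some 2
  else if G.td p1 v ≠ ⊤ then some 0
  else none

open Classical in
/-- Payoff of player `i` in the temporal Voronoi game. -/
noncomputable def vorPayoff (G : TemporalGraph) (p1 p2 i : ℕ) : ℕ :=
  (G.V.filter (fun v => vorColor G p1 p2 v = some i)).card

/-- Nash equilibrium of the two-player temporal Voronoi game `Vor(G, 2)`. -/
def vorNE (G : TemporalGraph) (p1 p2 : ℕ) : Prop :=
  p1 ∈ G.V ∧ p2 ∈ G.V ∧
  (∀ q ∈ G.V, vorPayoff G q p2 1 ≤ vorPayoff G p1 p2 1) ∧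
  (∀ q ∈ G.V, vorPayoff G p1 q 2 ≤ vorPayoff G p1 p2 2)

/-! ### Central vertices and boundaries -/

/-- `m` is a central vertex of the interval `[a, b]`: for odd length `ℓ` it is
`a + ⌊ℓ/2⌋`; for even length it is one of `a + ℓ/2 - 1` and `a + ℓ/2`. -/
def IsCentral (a b m : ℕ) : Prop :=
  if (b - a + 1) % 2 = 1 then m = a + (b - a + 1) / 2
  else m = a + (b - a + 1) / 2 - 1 ∨ m = a + (b - a + 1) / 2

open Classical in
/-- The number of vertices reachable from `v` until step `τ`. -/
noncomputable def reachCard (G : TemporalGraph) (v : ℕ) : ℕ :=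
  (G.V.filter (fun w => G.reaches v w)).card

/-- The maximum number of vertices reachable from any vertex. -/
noncomputable def maxReach (G : TemporalGraph) : ℕ := G.V.sup G.reachCard

/-- A nice central vertex: it reaches the maximum number of vertices and is a
central vertex of its (interval of) reachable vertices. -/
def IsNiceCentral (G : TemporalGraph) (v : ℕ) : Prop :=
  v ∈ G.V ∧ G.reachCard v = G.maxReach ∧
  ∃ a b : ℕ, (∀ w : ℕ, G.reaches v w ↔ a ≤ w ∧ w ≤ b) ∧ IsCentral a b v

/-- The first layer in which edge `e` appears (`⊤` if it never does). -/
noncomputable def firstAppear (G : TemporalGraph) (e : Sym2 ℕ) : ℕ∞ :=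
  sInf {t : ℕ∞ | ∃ k : ℕ, t = (k : ℕ∞) ∧ 1 ≤ k ∧ k ≤ G.tau ∧ e ∈ G.E k}

/-- `b ≥ v` is a right boundary of `v` if the edge `{b, b+1}` first appears
strictly after time `td(v, b)`. -/
def IsRightBoundary (G : TemporalGraph) (v b : ℕ) : Prop :=
  v ≤ b ∧ b ∈ G.V ∧ G.td v b < G.firstAppear s(b, b + 1)

/-- `b ≤ v` is a left boundary of `v` if the edge `{b-1, b}` first appears
strictly after time `td(v, b)`. -/
def IsLeftBoundary (G : TemporalGraph) (v b : ℕ) : Prop :=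
  b ≤ v ∧ b ∈ G.V ∧ G.td v b < G.firstAppear s(b - 1, b)

end TemporalGraph

open TemporalGraph

/-- The monotonically shrinking temporal path `P = ([8], E_1, E_2)` with
`E_1` the full path and `E_2 = E_1 \ {{2, 3}}`. -/
def P8 : TemporalGraph where
  n := 8
  tau := 2
  htau := by norm_num
  E := fun t => if t ≤ 1 then pathEdges 8 else pathEdges 8 \ {s(2, 3)}

/-- The monotonically shrinking temporal cycle `C = ([11], F_1, F_2)` with
`F_1` the full cycle and `F_2 = F_1 \ {{1,2}, {3,4}, {9,10}, {10,11}, {11,1}}`. -/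
def C8 : TemporalGraph where
  n := 11
  tau := 2
  htau := by norm_num
  E := fun t => if t ≤ 1 then cycleEdges 11
    else cycleEdges 11 \ {s(1, 2), s(3, 4), s(9, 10), s(10, 11), s(11, 1)}


/-! ### Auxiliary computable machinery for the Voronoi game -/

namespace VorAux

open TemporalGraph

/-- Search for the first `k ≤ K` with `p k = true`. -/
def firstLe (p : ℕ → Bool) : ℕ → Option ℕ
  | 0 => if p 0 then some 0 else none
  | k+1 => match firstLe p k with
    | some j => some j
    | none => if p (k+1) then some (k+1) else none

lemma firstLe_none {p : ℕ → Bool} : ∀ {K : ℕ}, firstLe p K = none →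
    ∀ i ≤ K, p i = false := by
  intro K
  induction K with
  | zero =>
    intro h i hi
    have : i = 0 := by omega
    subst this
    by_contra hp
    rw [Bool.not_eq_false] at hp
    simp [firstLe, hp] at h
  | succ K ih =>
    intro h i hi
    have hK : firstLe p K = none := by
      rcases hfk : firstLe p K with _ | j
      · rfl
      · simp only [firstLe, hfk] at h
        cases h
    rcases Nat.lt_succ_iff_lt_or_eq.mp (Nat.lt_succ_of_le hi) with h' | rfl
    · exact ih hK i (by omega)
    · by_contra hp
      rw [Bool.not_eq_false] at hp
      simp only [firstLe, hK, hp, if_true] at h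
      cases h
lemma firstLe_some {p : ℕ → Bool} : ∀ {K j : ℕ}, firstLe p K = some j →
    p j = true ∧ j ≤ K ∧ ∀ i < j, p i = false := by
  intro K
  induction K with
  | zero =>
    intro j h
    by_cases hp : p 0 = true
    · simp only [firstLe, hp, if_true, Option.some.injEq] at h
      subst h
      exact ⟨hp, le_rfl, by omega⟩
    · simp [firstLe, hp] at h
  | succ K ih =>
    intro j h
    rcases hK : firstLe p K with _ | j'
    · by_cases hp : p (K+1) = true
      · simp only [firstLe, hK, hp, if_true, Option.some.injEq] at h
        subst h
        exact ⟨hp, le_rfl, fun i hi => firstLe_none hK i (by omega)⟩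
      · simp [firstLe, hK, hp] at h
    · simp only [firstLe, hK, Option.some.injEq] at h
      subst h
      obtain ⟨h1, h2, h3⟩ := ih hK
      exact ⟨h1, by omega, h3⟩

/-- BFS-style list of vertices reachable within `k` steps. -/
def reachL (adj : ℕ → ℕ → ℕ → Bool) (N u : ℕ) : ℕ → List ℕ
  | 0 => [u]
  | k+1 => (List.range (N+1)).filter
      (fun v => (reachL adj N u k).any (fun w => w == v || adj (k+1) w v))

/-- Computable temporal distance. -/
def tdC (adj : ℕ → ℕ → ℕ → Bool) (N K u v : ℕ) : ℕ∞ :=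
  match firstLe (fun k => decide (v ∈ reachL adj N u k)) K with
  | some k => (k : ℕ∞)
  | none => ⊤

/-- Computable Voronoi color. -/
def colC (adj : ℕ → ℕ → ℕ → Bool) (N K p1 p2 v : ℕ) : Option ℕ :=
  if tdC adj N K p1 v < tdC adj N K p2 v then some 1
  else if tdC adj N K p2 v < tdC adj N K p1 v then some 2
  else if tdC adj N K p1 v ≠ ⊤ then some 0
  else none

/-- Computable Voronoi payoff. -/
def payoffC (adj : ℕ → ℕ → ℕ → Bool) (N K p1 p2 i : ℕ) : ℕ :=
  ((Finset.Icc 1 N).filter (fun v => colC adj N K p1 p2 v = some i)).card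

section Bridge

variable {G : TemporalGraph} {adj : ℕ → ℕ → ℕ → Bool}
variable (Hadj : ∀ t, 1 ≤ t → ∀ w v, (s(w, v) ∈ G.layer t ↔ adj t w v = true))
variable (Hb : ∀ t w v, adj t w v = true → w ≤ G.n ∧ v ≤ G.n)

lemma reachL_le {u : ℕ} (hu : u ≤ G.n) : ∀ {k v}, v ∈ reachL adj G.n u k → v ≤ G.n := by
  intro k v h
  cases k with
  | zero => simp only [reachL, List.mem_singleton] at h; omega
  | succ k =>
    simp only [reachL, List.mem_filter, List.mem_range] at h
    omega

include Hadj Hb in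
lemma mem_reachL {u : ℕ} (hu : u ≤ G.n) :
    ∀ k v, G.reachesBy u k v ↔ v ∈ reachL adj G.n u k := by
  intro k
  induction k with
  | zero => intro v; simp [reachesBy, reachL]
  | succ k ih =>
    intro v
    constructor
    · rintro (h | ⟨w, hw, he⟩)
      · have hv := (ih v).1 h
        simp only [reachL, List.mem_filter, List.mem_range, List.any_eq_true,
          Bool.or_eq_true, beq_iff_eq]
        exact ⟨by have := reachL_le hu hv; omega, v, hv, Or.inl rfl⟩
      · have ha := (Hadj (k+1) (by omega) w v).1 he
        simp only [reachL, List.mem_filter, List.mem_range, List.any_eq_true,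
          Bool.or_eq_true, beq_iff_eq]
        exact ⟨by have := (Hb _ _ _ ha).2; omega, w, (ih w).1 hw, Or.inr ha⟩
    · intro h
      simp only [reachL, List.mem_filter, List.mem_range, List.any_eq_true,
        Bool.or_eq_true, beq_iff_eq] at h
      obtain ⟨-, w, hw, (heq | ha)⟩ := h
      · exact Or.inl (heq ▸ (ih w).2 hw)
      · exact Or.inr ⟨w, (ih w).2 hw, (Hadj (k+1) (by omega) w v).2 ha⟩

lemma reachL_stab (Hconst : ∀ t, 2 ≤ t → adj t = adj 2) {u K : ℕ} (hK : 1 ≤ K)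
    (Hs : reachL adj G.n u (K+1) = reachL adj G.n u K) :
    ∀ m, K ≤ m → reachL adj G.n u m = reachL adj G.n u K := by
  intro m
  induction m with
  | zero => intro h; omega
  | succ m ih =>
    intro h
    rcases Nat.lt_or_ge K (m+1) with h' | h'
    · have hKm : K ≤ m := by omega
      show (List.range (G.n+1)).filter
          (fun v => (reachL adj G.n u m).any (fun w => w == v || adj (m+1) w v)) = _
      rw [ih hKm, Hconst (m+1) (by omega), ← Hconst (K+1) (by omega)]
      exact Hs
    · have : K = m + 1 := by omega
      rw [this]

include Hadj Hb in
lemma td_eq_tdC (Hconst : ∀ t, 2 ≤ t → adj t = adj 2) {u K : ℕ} (hu : u ≤ G.n) (hK : 1 ≤ K)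
    (Hs : reachL adj G.n u (K+1) = reachL adj G.n u K) (v : ℕ) :
    G.td u v = tdC adj G.n K u v := by
  unfold TemporalGraph.td tdC
  rcases h : firstLe (fun k => decide (v ∈ reachL adj G.n u k)) K with _ | j <;>
    simp only [h]
  · have hall := firstLe_none h
    refine sInf_eq_top.2 ?_
    rintro t ⟨k, rfl, hk⟩
    exfalso
    have hvk := (mem_reachL Hadj Hb hu k v).1 hk
    rcases le_or_gt k K with hkK | hKk
    · have := hall k hkK
      simp only [decide_eq_false_iff_not] at this
      exact this hvk
    · rw [reachL_stab Hconst hK Hs k (le_of_lt hKk)] at hvk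
      have := hall K le_rfl
      simp only [decide_eq_false_iff_not] at this
      exact this hvk
  · obtain ⟨hpj, hjK, hmin⟩ := firstLe_some h
    simp only [decide_eq_true_eq] at hpj
    apply le_antisymm
    · exact sInf_le ⟨j, rfl, (mem_reachL Hadj Hb hu j v).2 hpj⟩
    · refine le_sInf ?_
      rintro t ⟨k, rfl, hk⟩
      have hvk := (mem_reachL Hadj Hb hu k v).1 hk
      rcases lt_or_ge k j with hlt | hge
      · have := hmin k hlt
        simp only [decide_eq_false_iff_not] at this
        exact absurd hvk this
      · exact_mod_cast hge

include Hadj Hb in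
lemma vorColor_eq_colC (Hconst : ∀ t, 2 ≤ t → adj t = adj 2) {K : ℕ} (hK : 1 ≤ K)
    (Hstab : ∀ u, u ≤ G.n → reachL adj G.n u (K+1) = reachL adj G.n u K)
    {p1 p2 : ℕ} (hp1 : p1 ≤ G.n) (hp2 : p2 ≤ G.n) (v : ℕ) :
    G.vorColor p1 p2 v = colC adj G.n K p1 p2 v := by
  unfold TemporalGraph.vorColor colC
  rw [td_eq_tdC Hadj Hb Hconst hp1 hK (Hstab p1 hp1) v,
    td_eq_tdC Hadj Hb Hconst hp2 hK (Hstab p2 hp2) v]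

include Hadj Hb in
lemma vorPayoff_eq_payoffC (Hconst : ∀ t, 2 ≤ t → adj t = adj 2) {K : ℕ} (hK : 1 ≤ K)
    (Hstab : ∀ u, u ≤ G.n → reachL adj G.n u (K+1) = reachL adj G.n u K)
    {p1 p2 : ℕ} (hp1 : p1 ≤ G.n) (hp2 : p2 ≤ G.n) (i : ℕ) :
    G.vorPayoff p1 p2 i = payoffC adj G.n K p1 p2 i := by
  unfold TemporalGraph.vorPayoff payoffC TemporalGraph.V
  congr 1
  refine Finset.filter_congr fun v _ => ?_
  rw [vorColor_eq_colC Hadj Hb Hconst hK Hstab hp1 hp2 v]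

include Hadj Hb in
theorem no_NE (Hconst : ∀ t, 2 ≤ t → adj t = adj 2) {K : ℕ} (hK : 1 ≤ K)
    (Hstab : ∀ u, u ≤ G.n → reachL adj G.n u (K+1) = reachL adj G.n u K)
    (Hdec : ∀ p1 ∈ Finset.Icc 1 G.n, ∀ p2 ∈ Finset.Icc 1 G.n,
      ¬ ((∀ q ∈ Finset.Icc 1 G.n, payoffC adj G.n K q p2 1 ≤ payoffC adj G.n K p1 p2 1) ∧
         (∀ q ∈ Finset.Icc 1 G.n, payoffC adj G.n K p1 q 2 ≤ payoffC adj G.n K p1 p2 2))) :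
    ∀ p1 ∈ G.V, ∀ p2 ∈ G.V, ¬ G.vorNE p1 p2 := by
  intro p1 hp1 p2 hp2 hne
  obtain ⟨-, -, H1, H2⟩ := hne
  have hp1' : 1 ≤ p1 ∧ p1 ≤ G.n := Finset.mem_Icc.1 hp1
  have hp2' : 1 ≤ p2 ∧ p2 ≤ G.n := Finset.mem_Icc.1 hp2
  refine Hdec p1 hp1 p2 hp2 ⟨?_, ?_⟩
  · intro q hq
    have hq' : 1 ≤ q ∧ q ≤ G.n := Finset.mem_Icc.1 hq
    have := H1 q hq
    rwa [vorPayoff_eq_payoffC Hadj Hb Hconst hK Hstab hq'.2 hp2'.2 1,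
      vorPayoff_eq_payoffC Hadj Hb Hconst hK Hstab hp1'.2 hp2'.2 1] at this
  · intro q hq
    have hq' : 1 ≤ q ∧ q ≤ G.n := Finset.mem_Icc.1 hq
    have := H2 q hq
    rwa [vorPayoff_eq_payoffC Hadj Hb Hconst hK Hstab hp1'.2 hq'.2 2,
      vorPayoff_eq_payoffC Hadj Hb Hconst hK Hstab hp1'.2 hp2'.2 2] at this

end Bridge

/-- Computable adjacency for a temporal graph with two layers. -/
def adjOf (G : TemporalGraph) (t w v : ℕ) : Bool := decide (s(w, v) ∈ G.E (min t 2))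

lemma adjOf_const (G : TemporalGraph) : ∀ t, 2 ≤ t → adjOf G t = adjOf G 2 := by
  intro t ht
  funext w v
  unfold adjOf
  rw [show min t 2 = min 2 2 by omega]

lemma pathEdges_mem_le {n w v : ℕ} (h : s(w, v) ∈ pathEdges n) : w ≤ n ∧ v ≤ n := by
  unfold pathEdges at h
  simp only [Finset.mem_image, Finset.mem_Icc] at h
  obtain ⟨i, ⟨hi1, hi2⟩, he⟩ := h
  rw [Sym2.eq_iff] at he
  rcases he with ⟨rfl, h⟩ | ⟨rfl, h⟩ <;> omega

lemma cycleEdges_mem_le {n w v : ℕ} (hn : 1 ≤ n) (h : s(w, v) ∈ cycleEdges n) :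
    w ≤ n ∧ v ≤ n := by
  unfold cycleEdges at h
  rcases Finset.mem_insert.1 h with he | he
  · rw [Sym2.eq_iff] at he
    rcases he with ⟨h1, h2⟩ | ⟨h1, h2⟩ <;> omega
  · exact pathEdges_mem_le he

end VorAux

open VorAux

lemma hadjP8 : ∀ t, 1 ≤ t → ∀ w v, (s(w, v) ∈ P8.layer t ↔ adjOf P8 t w v = true) := by
  intro t ht w v
  unfold TemporalGraph.layer adjOf
  have htau : P8.tau = 2 := rfl
  rw [htau]
  rcases le_or_gt t 2 with h | h
  · rw [if_pos h, min_eq_left h, decide_eq_true_eq]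
  · rw [if_neg (by omega), show min t 2 = 2 by omega, decide_eq_true_eq]

lemma hbP8 : ∀ t w v, adjOf P8 t w v = true → w ≤ P8.n ∧ v ≤ P8.n := by
  intro t w v h
  rw [adjOf, decide_eq_true_eq] at h
  have h' : s(w, v) ∈ pathEdges 8 := by
    revert h
    show s(w, v) ∈ (if min t 2 ≤ 1 then pathEdges 8 else pathEdges 8 \ {s(2, 3)}) → _
    split
    · exact id
    · exact fun h => (Finset.mem_sdiff.1 h).1
  exact pathEdges_mem_le h'

lemma hadjC8 : ∀ t, 1 ≤ t → ∀ w v, (s(w, v) ∈ C8.layer t ↔ adjOf C8 t w v = true) := by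
  intro t ht w v
  unfold TemporalGraph.layer adjOf
  have htau : C8.tau = 2 := rfl
  rw [htau]
  rcases le_or_gt t 2 with h | h
  · rw [if_pos h, min_eq_left h, decide_eq_true_eq]
  · rw [if_neg (by omega), show min t 2 = 2 by omega, decide_eq_true_eq]

lemma hbC8 : ∀ t w v, adjOf C8 t w v = true → w ≤ C8.n ∧ v ≤ C8.n := by
  intro t w v h
  rw [adjOf, decide_eq_true_eq] at h
  have h' : s(w, v) ∈ cycleEdges 11 := by
    revert h
    show s(w, v) ∈ (if min t 2 ≤ 1 then cycleEdges 11
      else cycleEdges 11 \ {s(1, 2), s(3, 4), s(9, 10), s(10, 11), s(11, 1)}) → _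
    split
    · exact id
    · exact fun h => (Finset.mem_sdiff.1 h).1
  exact cycleEdges_mem_le (show (1:ℕ) ≤ 11 by omega) h'

/-- `P8` is a monotonically shrinking temporal path and `C8` a
monotonically shrinking temporal cycle, each with two layers, admitting no Nash
equilibrium in the respective two-player temporal Voronoi games. -/
theorem stmt8 :
    (P8.IsPath ∧ P8.Shrinking ∧ P8.tau = 2 ∧
      ∀ p1 ∈ P8.V, ∀ p2 ∈ P8.V, ¬ P8.vorNE p1 p2) ∧
    (C8.IsCycle ∧ C8.Shrinking ∧ C8.tau = 2 ∧
      ∀ p1 ∈ C8.V, ∀ p2 ∈ C8.V, ¬ C8.vorNE p1 p2) := by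
  constructor
  · refine ⟨⟨by decide, by decide⟩, ?_, rfl, ?_⟩
    · intro i h1 h2
      have h2' : i < 2 := h2
      have : i = 1 := by omega
      subst this
      show P8.E 2 ⊆ P8.E 1
      decide
    · refine no_NE hadjP8 hbP8 (adjOf_const P8) (K := 10) (by norm_num) ?_ ?_
      · intro u hu
        have key : ∀ u ∈ Finset.range 9,
            reachL (adjOf P8) P8.n u (10 + 1) = reachL (adjOf P8) P8.n u 10 := by decide
        have hu8 : u ≤ 8 := hu
        exact key u (Finset.mem_range.2 (by omega))
      · decide
  · refine ⟨⟨by decide, by decide⟩, ?_, rfl, ?_⟩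
    · intro i h1 h2
      have h2' : i < 2 := h2
      have : i = 1 := by omega
      subst this
      show C8.E 2 ⊆ C8.E 1
      decide
    · refine no_NE hadjC8 hbC8 (adjOf_const C8) (K := 13) (by norm_num) ?_ ?_
      · intro u hu
        have key : ∀ u ∈ Finset.range 12,
            reachL (adjOf C8) C8.n u (13 + 1) = reachL (adjOf C8) C8.n u 13 := by decide
        have hu11 : u ≤ 11 := hu
        exact key u (Finset.mem_range.2 (by omega))
      · decide
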